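/- arXiv:1901.05276 — 3 statements merged into one kernel-verified Lean document; each statement's English description precedes it below -/
import Mathlib

section
/- If E ⊆ ℂ is connected and contains a sequence of bounded simply connected domains (G_n) with ∂G_n ⊆ E, G_n ⊆ G_{n+1}, and ⋃ G_n = ℂ (i.e., E is a spider's web), then the image E' = exp(E) is connected and for every point z ∈ ℂ* there is an open set U ⊆ ℂ*, whose closure in the Riemann sphere avoids 0 and ∞, with z ∈ U and ∂U ⊆ E'. -/
open Complex Set

/-- A set `X ⊆ ℂ*` is bounded in `ℂ*` if it is contained in a closed annulus
`{z : r ≤ |z| ≤ R}` with `0 < r`. -/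
def BoundedInCStar (X : Set ℂ) : Prop :=
  ∃ r R : ℝ, 0 < r ∧ X ⊆ {z : ℂ | r ≤ ‖z‖ ∧ ‖z‖ ≤ R}

/-!
Take `U = exp(G n)` for a domain `G n` containing a logarithm of `z`. Since `G n` is bounded,
`Re` is bounded on it, so `U` lies in an annulus. Since `closure (G n)` is compact and `exp` is
continuous and open, `closure U = exp(closure (G n))` and `interior U ⊇ exp(G n)`, so every
frontier point of `U` is the image of a frontier point of `G n`, which lies in `E`.
-/

theorem IsOpenMap.frontier_image_subset {X Y : Type*} [TopologicalSpace X] [TopologicalSpace Y]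
    [T2Space Y] {f : X → Y} (hf : IsOpenMap f) (hfc : Continuous f) {s : Set X}
    (hs : IsCompact (closure s)) : frontier (f '' s) ⊆ f '' frontier s := by
  rintro _ ⟨hx, hx'⟩
  rw [← image_closure_of_isCompact hs hfc.continuousOn] at hx
  obtain ⟨y, hy, rfl⟩ := hx
  exact ⟨y, ⟨hy, fun hyi => hx' (hf.image_interior_subset s ⟨y, hyi, rfl⟩)⟩, rfl⟩

theorem boundedInCStar_exp_image {s : Set ℂ} (hs : Bornology.IsBounded s) :
    BoundedInCStar (exp '' s) := by
  obtain ⟨M, hM⟩ := hs.subset_closedBall 0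
  refine ⟨Real.exp (-M), Real.exp M, Real.exp_pos _, ?_⟩
  rintro _ ⟨y, hy, rfl⟩
  have hre : |y.re| ≤ M :=
    (abs_re_le_norm y).trans (by simpa using hM hy)
  rw [abs_le] at hre
  simp only [mem_ofPred_eq, norm_exp, Real.exp_le_exp]
  exact hre

theorem stmt0_general (E : Set ℂ) (hE : IsConnected E)
    (G : ℕ → Set ℂ)
    (hopen : ∀ n, IsOpen (G n))
    (hbdd : ∀ n, Bornology.IsBounded (G n))
    (hfront : ∀ n, frontier (G n) ⊆ E)
    (hunion : ⋃ n, G n = univ) :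
    IsConnected (Complex.exp '' E) ∧
    ∀ z : ℂ, z ≠ 0 → ∃ U : Set ℂ, IsOpen U ∧ U ⊆ {(0 : ℂ)}ᶜ ∧ BoundedInCStar U ∧
      z ∈ U ∧ frontier U ⊆ Complex.exp '' E := by
  refine ⟨hE.image _ continuous_exp.continuousOn, fun z hz => ?_⟩
  obtain ⟨w, rfl⟩ : z ∈ range exp := by rwa [range_exp]
  obtain ⟨n, hwn⟩ := mem_iUnion.1 (hunion ▸ mem_univ w)
  refine ⟨exp '' G n, isOpenMap_exp _ (hopen n), ?_, boundedInCStar_exp_image (hbdd n),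
    mem_image_of_mem _ hwn, ?_⟩
  · rintro _ ⟨y, -, rfl⟩
    exact exp_ne_zero y
  · exact (isOpenMap_exp.frontier_image_subset continuous_exp (hbdd n).isCompact_closure).trans
      (image_mono (hfront n))

/-- If `E` is a spider's web in `ℂ`, then `exp(E)` is connected and separates every
point of `ℂ*` from `{0, ∞}`. -/
theorem stmt0 (E : Set ℂ) (hE : IsConnected E)
    (G : ℕ → Set ℂ)
    (hopen : ∀ n, IsOpen (G n)) (hconn : ∀ n, IsConnected (G n))
    (hbdd : ∀ n, Bornology.IsBounded (G n))
    (hsc : ∀ n, SimplyConnectedSpace (G n))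
    (hfront : ∀ n, frontier (G n) ⊆ E)
    (hmono : ∀ n, G n ⊆ G (n + 1))
    (hunion : ⋃ n, G n = univ) :
    IsConnected (Complex.exp '' E) ∧
    ∀ z : ℂ, z ≠ 0 → ∃ U : Set ℂ, IsOpen U ∧ U ⊆ {(0 : ℂ)}ᶜ ∧ BoundedInCStar U ∧
      z ∈ U ∧ frontier U ⊆ Complex.exp '' E :=
  stmt0_general E hE G hopen hbdd hfront hunion
end

section
/- Let λ ≥ 2 and define f_λ(z) = λ z exp(e^{−z}/z) on ℂ*. If Re z ≥ 2, then Re f_λ(z) ≥ 0.7 λ Re z. In particular the right half-plane {Re z ≥ 2} is forward invariant under f_λ and Re f_λ^n(z) → ∞ as n → ∞ for z in this half-plane. -/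
/-!
Write `f_λ(z) = λ z e^w` with `w = e^{-z}/z`. Since `|z w| = e^{-Re z} ≤ e^{-2} < 0.3`, the
estimate `|e^w - 1| ≤ 2|w|` gives `|z e^w - z| ≤ 2 e^{-Re z} < 0.6 ≤ 0.3 Re z`, hence
`Re f_λ(z) ≥ 0.7 λ Re z ≥ 1.4 Re z`. Iterating, the real part grows at least like `1.4ⁿ`.
-/

open Complex Set Filter

lemma Real.exp_neg_two_lt : Real.exp (-2) < 0.3 := by
  have h : (10 : ℝ) / 3 < Real.exp 2 := by
    have := Real.exp_one_gt_d9
    rw [show (2 : ℝ) = 1 + 1 by norm_num, Real.exp_add]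
    nlinarith
  rw [Real.exp_neg, inv_lt_comm₀ (Real.exp_pos 2) (by norm_num)]
  norm_num
  linarith

lemma Complex.norm_mul_exp_exp_neg_div_sub_self_le {z : ℂ} (hz : Real.exp (-z.re) ≤ ‖z‖) :
    ‖z * exp (exp (-z) / z) - z‖ ≤ 2 * Real.exp (-z.re) := by
  have hz0 : 0 < ‖z‖ := (Real.exp_pos _).trans_le hz
  have hw : ‖exp (-z) / z‖ = Real.exp (-z.re) / ‖z‖ := by
    rw [norm_div, norm_exp, neg_re]
  have hw1 : ‖exp (-z) / z‖ ≤ 1 := by rwa [hw, div_le_one hz0]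
  calc ‖z * exp (exp (-z) / z) - z‖ = ‖z‖ * ‖exp (exp (-z) / z) - 1‖ := by
        rw [← norm_mul, mul_sub, mul_one]
    _ ≤ ‖z‖ * (2 * ‖exp (-z) / z‖) := by gcongr; exact norm_exp_sub_one_le hw1
    _ = 2 * Real.exp (-z.re) := by rw [hw]; field_simp

lemma Complex.le_re_mul_exp_exp_neg_div {z : ℂ} (hz : 2 ≤ z.re) :
    0.7 * z.re ≤ (z * exp (exp (-z) / z)).re := by
  have hsmall : Real.exp (-z.re) < 0.3 :=
    (Real.exp_le_exp.2 (neg_le_neg hz)).trans_lt Real.exp_neg_two_lt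
  have hnorm : Real.exp (-z.re) ≤ ‖z‖ := by
    linarith [abs_re_le_norm z, le_abs_self z.re]
  have hdiff := (abs_re_le_norm _).trans (norm_mul_exp_exp_neg_div_sub_self_le hnorm)
  rw [sub_re] at hdiff
  linarith [(abs_le.1 hdiff).1]

lemma tendsto_comp_iterate_atTop_of_mul_le {α : Type*} {f : α → α} {u : α → ℝ}
    {s : Set α} {c : ℝ} (hc : 1 < c) (hf : MapsTo f s s) (hu : ∀ x ∈ s, 0 < u x)
    (hgrowth : ∀ x ∈ s, c * u x ≤ u (f x)) {x : α} (hx : x ∈ s) :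
    Tendsto (fun n => u (f^[n] x)) atTop atTop := by
  have hpow : ∀ n : ℕ, c ^ n * u x ≤ u (f^[n] x) := by
    intro n
    induction n with
    | zero => simp
    | succ n ih =>
      rw [Function.iterate_succ_apply', pow_succ', mul_assoc]
      exact (mul_le_mul_of_nonneg_left ih (by linarith)).trans
        (hgrowth _ (hf.iterate n hx))
  exact tendsto_atTop_mono hpow
    ((tendsto_pow_atTop_atTop_of_one_lt hc).atTop_mul_const (hu x hx))

/-- For `λ ≥ 2` and `f_λ(z) = λ z exp(e^{−z}/z)`: if `Re z ≥ 2` then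
`Re f_λ(z) ≥ 0.7 λ Re z`; in particular the half-plane `{Re z ≥ 2}` is forward
invariant and real parts of orbits tend to `∞` there. -/
theorem stmt8 (lam : ℝ) (hlam : 2 ≤ lam) :
    let f : ℂ → ℂ := fun z => (lam : ℂ) * z * Complex.exp (Complex.exp (-z) / z)
    (∀ z : ℂ, 2 ≤ z.re → 0.7 * lam * z.re ≤ (f z).re) ∧
    MapsTo f {z : ℂ | 2 ≤ z.re} {z : ℂ | 2 ≤ z.re} ∧
    (∀ z : ℂ, 2 ≤ z.re → Tendsto (fun n : ℕ => (f^[n] z).re) atTop atTop) := by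
  intro f
  have hre : ∀ z : ℂ, 2 ≤ z.re → 0.7 * lam * z.re ≤ (f z).re := by
    intro z hz
    have h := mul_le_mul_of_nonneg_left (le_re_mul_exp_exp_neg_div hz)
      (by linarith : (0 : ℝ) ≤ lam)
    simp only [f, mul_assoc, re_ofReal_mul]
    linarith
  have hgrowth : ∀ z ∈ {z : ℂ | 2 ≤ z.re}, 1.4 * z.re ≤ (f z).re :=
    fun z (hz : 2 ≤ z.re) => by nlinarith [hre z hz]
  have hmaps : MapsTo f {z : ℂ | 2 ≤ z.re} {z : ℂ | 2 ≤ z.re} := by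
    intro z (hz : 2 ≤ z.re)
    show 2 ≤ (f z).re
    linarith [hgrowth z hz]
  exact ⟨hre, hmaps, fun z hz => tendsto_comp_iterate_atTop_of_mul_le (by norm_num) hmaps
    (fun w (hw : 2 ≤ w.re) => by linarith) hgrowth hz⟩
end

section
/- Fix ε₀ = 1/4 and, for R ≥ 1, define the channel C⁺(R) = {z = x+iy : x > 0, |y| < ε₀ x, |z| < 1/R}. There exists K > 1 such that for every L > 1 there is R₀ > 1 with: for all z ∈ C⁺(R₀), |f_λ(z)| ≥ L/|z|, where f_λ(z) = λ z exp(e^{−z}/z), λ ≥ 32; moreover if z₀, z₁ ∈ C⁺(R₀) with |z₁/z₀| ≥ K, then |f_λ(z₀)/f_λ(z₁)| ≥ LK. -/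
/-!
Write `g(z) = Re (e^{-z}/z)`, so that `|f_λ(z)| = λ |z| e^{g(z)}`. In the channel
`g(z) = e^{-x} (x cos y - y sin y) / |z|²` lies between `1/(2|z|)` and `3/(2|z|)`. Hence
`|z| |f_λ(z)| ≥ λ |z|² e^{1/(2|z|)} ≥ λ / (48 |z|)`, and if `|z₁| ≥ 6 |z₀|` then
`g(z₀) - g(z₁) ≥ 1/(4|z₀|)`, so `|f_λ(z₀)/f_λ(z₁)| ≥ (|z₀|/|z₁|) e^{1/(4|z₀|)} ≥ 1/(32 |z₀| |z₁|)`.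
As `|z₀|, |z₁| < 1/R₀`, the choices `K = 6` and `R₀ = 32 L` work.
-/

open Complex Set

/-- The channel `C⁺(R)` near the origin along the positive real axis, with `ε₀ = 1/4`. -/
def Cplus (R : ℝ) : Set ℂ :=
  {z : ℂ | 0 < z.re ∧ |z.im| < (1 / 4) * z.re ∧ ‖z‖ < 1 / R}

lemma re_exp_neg_div_self (z : ℂ) :
    (exp (-z) / z).re =
      Real.exp (-z.re) * (z.re * Real.cos z.im - z.im * Real.sin z.im) / ‖z‖ ^ 2 := by
  rw [div_re, Complex.sq_norm, normSq_apply]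
  simp only [exp_re, exp_im, neg_re, neg_im, Real.cos_neg, Real.sin_neg]
  ring

lemma exp_neg_mul_cos_sub_sin_mem_Icc {x y : ℝ} (hx : 0 < x) (hx' : x ≤ 1 / 10)
    (hy : |y| ≤ x / 4) :
    Real.exp (-x) * (x * Real.cos y - y * Real.sin y) ∈ Icc (4 / 5 * x) (3 / 2 * x) := by
  have hy2 : y ^ 2 ≤ x ^ 2 / 16 := by nlinarith [sq_abs y, abs_nonneg y]
  have hysin : |y * Real.sin y| ≤ y ^ 2 := by
    rw [abs_mul, sq, ← abs_mul_abs_self y]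
    exact mul_le_mul_of_nonneg_left Real.abs_sin_le_abs (abs_nonneg y)
  have hcos := Real.one_sub_sq_div_two_le_cos (x := y)
  have hexp : 1 - x ≤ Real.exp (-x) := by linarith [Real.add_one_le_exp (-x)]
  have hexp' : Real.exp (-x) ≤ 1 := Real.exp_le_one_iff.2 (by linarith)
  have hB : 99 / 100 * x ≤ x * Real.cos y - y * Real.sin y := by
    nlinarith [le_abs_self (y * Real.sin y)]
  have hB' : x * Real.cos y - y * Real.sin y ≤ 3 / 2 * x := by
    nlinarith [Real.cos_le_one y, neg_abs_le (y * Real.sin y)]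
  constructor <;> nlinarith

lemma norm_pos_of_mem_Cplus {R : ℝ} {z : ℂ} (hz : z ∈ Cplus R) : 0 < ‖z‖ :=
  hz.1.trans_le (re_le_norm z)

lemma mul_norm_lt_one_of_mem_Cplus {R : ℝ} (hR : 0 < R) {z : ℂ} (hz : z ∈ Cplus R) :
    R * ‖z‖ < 1 :=
  (lt_div_iff₀' hR).1 hz.2.2

lemma re_exp_neg_div_mem_Icc_of_mem_Cplus {R : ℝ} (hR : 10 ≤ R) {z : ℂ} (hz : z ∈ Cplus R) :
    (exp (-z) / z).re ∈ Icc (1 / (2 * ‖z‖)) (3 / (2 * ‖z‖)) := by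
  obtain ⟨hx, hy, hzR⟩ := hz
  have ht : 0 < ‖z‖ := hx.trans_le (re_le_norm z)
  have hxt : z.re ≤ ‖z‖ := re_le_norm z
  have hx' : z.re ≤ 1 / 10 := by
    linarith [one_div_le_one_div_of_le (by norm_num : (0 : ℝ) < 10) hR]
  have hsq : ‖z‖ ^ 2 = z.re ^ 2 + z.im ^ 2 := by rw [Complex.sq_norm, normSq_apply]; ring
  have htx : 4 / 5 * ‖z‖ ≤ z.re := by nlinarith [sq_abs z.im, abs_nonneg z.im]
  rw [re_exp_neg_div_self]
  set N := Real.exp (-z.re) * (z.re * Real.cos z.im - z.im * Real.sin z.im)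
  obtain ⟨hN, hN'⟩ : N ∈ Icc _ _ := exp_neg_mul_cos_sub_sin_mem_Icc hx hx' (by linarith [hy])
  have hlo : 16 / 25 * ‖z‖ ≤ N := by linarith
  have hhi : N ≤ 3 / 2 * ‖z‖ := by linarith
  rw [mem_Icc, div_le_div_iff₀ (by positivity) (by positivity),
    div_le_div_iff₀ (by positivity) (by positivity)]
  constructor <;> nlinarith

lemma div_le_pow_mul_exp_div {t c : ℝ} (ht : 0 < t) (hc : 0 ≤ c) (n : ℕ) :
    c ^ (n + 1) / ((n + 1).factorial * t) ≤ t ^ n * Real.exp (c / t) := by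
  have := Real.pow_div_factorial_le_exp _ (div_nonneg hc ht.le) (n + 1)
  calc c ^ (n + 1) / ((n + 1).factorial * t)
        = t ^ n * ((c / t) ^ (n + 1) / (n + 1).factorial) := by
          rw [div_pow, pow_succ t]; field_simp
    _ ≤ t ^ n * Real.exp (c / t) := by gcongr

lemma norm_ofReal_mul_mul_exp {lam : ℝ} (hlam : 0 ≤ lam) (z w : ℂ) :
    ‖(lam : ℂ) * z * exp w‖ = lam * ‖z‖ * Real.exp w.re := by
  rw [norm_mul, norm_mul, norm_exp, norm_real, Real.norm_of_nonneg hlam]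

lemma mul_div_le_norm_mul_norm_of_mem_Cplus {R lam : ℝ} (hR : 10 ≤ R) (hlam : 0 ≤ lam) {z : ℂ}
    (hz : z ∈ Cplus R) :
    lam * R / 48 ≤ ‖z‖ * ‖(lam : ℂ) * z * exp (exp (-z) / z)‖ := by
  have ht := norm_pos_of_mem_Cplus hz
  have hRt : R ≤ 1 / ‖z‖ := by
    rw [le_div_iff₀ ht]; exact (mul_norm_lt_one_of_mem_Cplus (by linarith) hz).le
  have hg : 1 / 2 / ‖z‖ ≤ (exp (-z) / z).re := by
    rw [div_div]; exact (re_exp_neg_div_mem_Icc_of_mem_Cplus hR hz).1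
  rw [norm_ofReal_mul_mul_exp hlam]
  have hconst : (1 / 2 : ℝ) ^ (2 + 1) / ((2 + 1).factorial * ‖z‖) = 1 / ‖z‖ / 48 := by
    norm_num [Nat.factorial]; ring
  calc lam * R / 48 ≤ lam * ((1 / 2) ^ (2 + 1) / ((2 + 1).factorial * ‖z‖)) := by
        rw [hconst, mul_div_assoc]; gcongr
    _ ≤ lam * (‖z‖ ^ 2 * Real.exp (1 / 2 / ‖z‖)) := by
        gcongr; exact div_le_pow_mul_exp_div ht (by norm_num) 2
    _ ≤ ‖z‖ * (lam * ‖z‖ * Real.exp (exp (-z) / z).re) := by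
        rw [show ‖z‖ * (lam * ‖z‖ * Real.exp (exp (-z) / z).re)
          = lam * (‖z‖ ^ 2 * Real.exp (exp (-z) / z).re) by ring]
        gcongr

lemma sq_div_le_norm_div_of_mem_Cplus {R lam : ℝ} (hR : 10 ≤ R) (hlam : 0 < lam) {z₀ z₁ : ℂ}
    (hz₀ : z₀ ∈ Cplus R) (hz₁ : z₁ ∈ Cplus R) (h : 6 * ‖z₀‖ ≤ ‖z₁‖) :
    R ^ 2 / 32 ≤
      ‖(lam * z₀ * exp (exp (-z₀) / z₀)) / (lam * z₁ * exp (exp (-z₁) / z₁))‖ := by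
  have ht₀ := norm_pos_of_mem_Cplus hz₀
  have ht₁ := norm_pos_of_mem_Cplus hz₁
  have hgap : 1 / 4 / ‖z₀‖ + (exp (-z₁) / z₁).re ≤ (exp (-z₀) / z₀).re := by
    have h₀ := (re_exp_neg_div_mem_Icc_of_mem_Cplus hR hz₀).1
    have h₁ := (re_exp_neg_div_mem_Icc_of_mem_Cplus hR hz₁).2
    have h₁₀ : 3 / (2 * ‖z₁‖) ≤ 1 / 4 / ‖z₀‖ := by
      rw [div_div, div_le_div_iff₀ (by positivity) (by positivity)]; linarith
    have : 1 / 4 / ‖z₀‖ + 1 / 4 / ‖z₀‖ = 1 / (2 * ‖z₀‖) := by field_simp; ring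
    linarith
  have hR₀ := mul_norm_lt_one_of_mem_Cplus (by linarith) hz₀
  have hR₁ := mul_norm_lt_one_of_mem_Cplus (by linarith) hz₁
  have hRR : R ^ 2 * ‖z₁‖ ≤ 1 / ‖z₀‖ := by
    rw [le_div_iff₀ ht₀]
    nlinarith [mul_lt_mul'' hR₁ hR₀ (by positivity) (by positivity)]
  have hconst : (1 / 4 : ℝ) ^ (1 + 1) / ((1 + 1).factorial * ‖z₀‖) = 1 / ‖z₀‖ / 32 := by
    norm_num [Nat.factorial]; ring
  rw [norm_div, norm_ofReal_mul_mul_exp hlam.le, norm_ofReal_mul_mul_exp hlam.le,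
    le_div_iff₀ (by positivity)]
  calc R ^ 2 / 32 * (lam * ‖z₁‖ * Real.exp (exp (-z₁) / z₁).re)
        = lam * (R ^ 2 * ‖z₁‖ / 32) * Real.exp (exp (-z₁) / z₁).re := by ring
    _ ≤ lam * ((1 / 4) ^ (1 + 1) / ((1 + 1).factorial * ‖z₀‖)) *
          Real.exp (exp (-z₁) / z₁).re := by rw [hconst]; gcongr
    _ ≤ lam * (‖z₀‖ ^ 1 * Real.exp (1 / 4 / ‖z₀‖)) * Real.exp (exp (-z₁) / z₁).re := by
        gcongr; exact div_le_pow_mul_exp_div ht₀ (by norm_num) 1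
    _ = lam * ‖z₀‖ * Real.exp (1 / 4 / ‖z₀‖ + (exp (-z₁) / z₁).re) := by
        rw [Real.exp_add]; ring
    _ ≤ lam * ‖z₀‖ * Real.exp (exp (-z₀) / z₀).re := by gcongr

/-- Blow-up in the channel `C⁺`: there is `K > 1` so that for every `L > 1` there is
`R₀ > 1` with: for `λ ≥ 32` and `z ∈ C⁺(R₀)`, `|f_λ(z)| ≥ L/|z|`; and if
`z₀, z₁ ∈ C⁺(R₀)` with `|z₁/z₀| ≥ K`, then `|f_λ(z₀)/f_λ(z₁)| ≥ LK`. -/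
theorem stmt16 :
    ∃ K : ℝ, 1 < K ∧ ∀ L : ℝ, 1 < L → ∃ R₀ : ℝ, 1 < R₀ ∧
      ∀ lam : ℝ, 32 ≤ lam →
        (∀ z ∈ Cplus R₀,
          L / ‖z‖ ≤
            ‖(lam : ℂ) * z * Complex.exp (Complex.exp (-z) / z)‖) ∧
        (∀ z₀ ∈ Cplus R₀, ∀ z₁ ∈ Cplus R₀, K ≤ ‖z₁ / z₀‖ →
          L * K ≤ ‖
            (((lam : ℂ) * z₀ * Complex.exp (Complex.exp (-z₀) / z₀)) /
             ((lam : ℂ) * z₁ * Complex.exp (Complex.exp (-z₁) / z₁)))‖) := by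
  refine ⟨6, by norm_num, fun L hL => ⟨32 * L, by linarith, fun lam hlam =>
    ⟨fun z hz => ?_, fun z₀ hz₀ z₁ hz₁ hK => ?_⟩⟩⟩
  · rw [div_le_iff₀' (norm_pos_of_mem_Cplus hz)]
    have := mul_div_le_norm_mul_norm_of_mem_Cplus (by linarith) (by linarith) hz
    nlinarith
  · have h6 : 6 * ‖z₀‖ ≤ ‖z₁‖ := by
      rwa [norm_div, le_div_iff₀ (norm_pos_of_mem_Cplus hz₀)] at hK
    calc L * 6 ≤ (32 * L) ^ 2 / 32 := by nlinarith
      _ ≤ _ := sq_div_le_norm_div_of_mem_Cplus (by linarith) (by linarith) hz₀ hz₁ h6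
end
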